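/- Define F : ℝ × ℝ → ℝ by F(x, z) := −x³/3 + x·(x² − z) − (2/3)·(max(x² − z, 0))^{3/2}, and for κ > 0 define G_κ : ℝ → ℝ by G_κ(v) := κ · sgn(v) · |v|^{3/2}. There exists κ⋆ > 0 such that for every κ ∈ (0, κ⋆] and all L > 0, L̄ > 0, there is a constant C ≥ 0 (depending on κ, L, L̄) such that for all x, u ∈ ℝ with |x| ≤ L and |u| ≤ L̄, the integral ∫_ℝ exp( 2·F(x, u − v) + 2·G_κ(v) ) dv is finite and at most C. -/
import Mathlib


open Real MeasureTheory

/-- The exponent `F(x, z) = -x³/3 + x(x² - z) - (2/3)(max(x² - z, 0))^{3/2}` of the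
super-Airy bound `C e^{F(x,z)}` on the kernel `S_{1,x}(z)` from Appendix C. -/
noncomputable def airyExponent (x z : ℝ) : ℝ :=
  -x ^ 3 / 3 + x * (x ^ 2 - z) - 2 / 3 * max (x ^ 2 - z) 0 ^ ((3 : ℝ) / 2)

/-- The conjugating exponent `G_κ(v) = κ sgn(v) |v|^{3/2}` of the weight `Γ` used in
the Brownian scattering transform. -/
noncomputable def scatteringExponent (κ v : ℝ) : ℝ :=
  κ * Real.sign v * |v| ^ ((3 : ℝ) / 2)

lemma rpow_three_halves {t : ℝ} (ht : 0 ≤ t) : t ^ ((3:ℝ)/2) = t * Real.sqrt t := by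
  rw [show (3:ℝ)/2 = 1 + 1/2 by norm_num, Real.rpow_add' ht (by norm_num), Real.rpow_one,
    Real.sqrt_eq_rpow]

lemma integrable_exp_neg_abs' : Integrable (fun v : ℝ => Real.exp (-|v|)) := by
  have h1 : IntegrableOn (fun v : ℝ => Real.exp (-|v|)) (Set.Iic 0) := by
    apply (integrableOn_exp_Iic 0).congr_fun ?_ measurableSet_Iic
    intro v hv
    simp only [Set.mem_Iic] at hv
    simp [abs_of_nonpos hv]
  have h2 : IntegrableOn (fun v : ℝ => Real.exp (-|v|)) (Set.Ioi 0) := by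
    apply (exp_neg_integrableOn_Ioi 0 one_pos).congr_fun ?_ measurableSet_Ioi
    intro v hv
    simp only [Set.mem_Ioi] at hv
    simp [abs_of_pos hv]
  have := h1.union h2
  rwa [Set.Iic_union_Ioi, integrableOn_univ] at this

lemma lin_le (a b t : ℝ) (ha : 0 ≤ a) (hb : 0 < b) (ht : 0 ≤ t) :
    a * t ≤ b * t ^ ((3:ℝ)/2) + a ^ 3 / b ^ 2 := by
  have hr : 0 ≤ t ^ ((3:ℝ)/2) := Real.rpow_nonneg ht _
  rcases le_or_gt t ((a/b)^2) with h | h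
  · have : a * t ≤ a * (a/b)^2 := by nlinarith
    have e : a * (a/b)^2 = a^3 / b^2 := by field_simp
    nlinarith
  · have hst : Real.sqrt t ≥ a / b := by
      have := Real.sqrt_le_sqrt h.le
      rwa [Real.sqrt_sq (by positivity)] at this
    have hts : b * t ^ ((3:ℝ)/2) = b * (t * Real.sqrt t) := by rw [rpow_three_halves ht]
    have hab : 0 ≤ a^3 / b^2 := by positivity
    have h1 : (b*t) * (a/b) ≤ (b*t) * Real.sqrt t :=
      mul_le_mul_of_nonneg_left hst (mul_nonneg hb.le ht)
    have h2 : (b*t) * (a/b) = a * t := by field_simp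
    rw [h2] at h1
    nlinarith

lemma sign_mul_rpow (v : ℝ) : Real.sign v * |v| ^ ((3:ℝ)/2) = v * Real.sqrt |v| := by
  rcases lt_trichotomy v 0 with h | h | h
  · rw [Real.sign_of_neg h, rpow_three_halves (abs_nonneg v), abs_of_neg h]
    ring
  · simp [h]
  · rw [Real.sign_of_pos h, rpow_three_halves (abs_nonneg v), abs_of_pos h]
    ring

lemma two_rpow_le_three : (2:ℝ) ^ ((3:ℝ)/2) ≤ 3 := by
  rw [rpow_three_halves (by norm_num : (0:ℝ) ≤ 2)]
  nlinarith [Real.sq_sqrt (by norm_num : (0:ℝ) ≤ 2), Real.sqrt_nonneg 2]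

set_option maxHeartbeats 1000000 in
lemma exponent_bound (κ L Lbar x u v : ℝ) (hκ : 0 < κ) (hκ' : κ ≤ 1/9)
    (hL : 0 < L) (hLbar : 0 < Lbar) (hx : |x| ≤ L) (hu : |u| ≤ Lbar) :
    2 * airyExponent x (u - v) + 2 * scatteringExponent κ v ≤
      (2/3*L^3 + 2*L*(L^2+Lbar)) + 4*L*Lbar + 2*κ*(2*Lbar)^((3:ℝ)/2) + 2*Lbar
        + (2*L+1)^3/(2*κ)^2 + (2*L+1)^3/((2:ℝ)/9)^2 - |v| := by
  set M := max (x ^ 2 - (u - v)) 0 with hM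
  have hM0 : 0 ≤ M := le_max_right _ _
  have hMr : 0 ≤ M ^ ((3:ℝ)/2) := Real.rpow_nonneg hM0 _
  have key : 2 * airyExponent x (u - v) + 2 * scatteringExponent κ v =
      (-2*x^3/3 + 2*x*(x^2-u)) + 2*(x*v) - 4/3 * M ^ ((3:ℝ)/2)
        + 2*κ*(Real.sign v * |v| ^ ((3:ℝ)/2)) := by
    simp only [airyExponent, scatteringExponent, hM]; ring
  rw [key]
  -- basic bounds
  have hxa := abs_le.mp hx
  have hua := abs_le.mp hu
  have hx3 : |x ^ 3| ≤ L ^ 3 := by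
    rw [abs_pow]; exact pow_le_pow_left₀ (abs_nonneg x) hx 3
  have hx3' := abs_le.mp hx3
  have hxu : |x * (x ^ 2 - u)| ≤ L * (L ^ 2 + Lbar) := by
    rw [abs_mul]
    apply mul_le_mul hx _ (abs_nonneg _) hL.le
    calc |x ^ 2 - u| ≤ |x ^ 2| + |u| := abs_sub _ _
      _ ≤ L ^ 2 + Lbar := by
          have : |x ^ 2| ≤ L ^ 2 := by
            rw [abs_pow]; exact pow_le_pow_left₀ (abs_nonneg x) hx 2
          linarith
  have hxu' := abs_le.mp hxu
  have hc0 : -2*x^3/3 + 2*x*(x^2-u) ≤ 2/3*L^3 + 2*L*(L^2+Lbar) := by linarith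
  have habs : 0 ≤ |v| ^ ((3:ℝ)/2) := Real.rpow_nonneg (abs_nonneg v) _
  have h2Lb : 0 ≤ 2*κ*(2*Lbar)^((3:ℝ)/2) := by positivity
  have hq1 : 0 ≤ (2*L+1)^3/(2*κ)^2 := by positivity
  have hq2 : 0 ≤ (2*L+1)^3/((2:ℝ)/9)^2 := by positivity
  have haux : 0 ≤ L * Lbar := by positivity
  have hxv : x * v ≤ L * |v| := by
    calc x * v ≤ |x * v| := le_abs_self _
      _ = |x| * |v| := abs_mul _ _
      _ ≤ L * |v| := mul_le_mul_of_nonneg_right hx (abs_nonneg v)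
  rcases le_or_gt v 0 with hv | hv
  · -- v ≤ 0
    have hsgn : Real.sign v * |v| ^ ((3:ℝ)/2) ≤ -(|v| ^ ((3:ℝ)/2)) := by
      rcases eq_or_lt_of_le hv with h0 | h0
      · subst h0
        simp
      · rw [Real.sign_of_neg h0]; ring_nf; exact le_refl _
    have hlin := lin_le (2*L+1) (2*κ) |v| (by linarith) (by linarith) (abs_nonneg v)
    have hsm : 2*κ*(Real.sign v * |v|^((3:ℝ)/2)) ≤ 2*κ*(-(|v|^((3:ℝ)/2))) :=
      mul_le_mul_of_nonneg_left hsgn (by positivity)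
    linarith
  rcases le_or_gt v (2*Lbar) with hv2 | hv2
  · -- 0 < v ≤ 2 Lbar
    have habsv : |v| = v := abs_of_pos hv
    have hsgn : Real.sign v * |v| ^ ((3:ℝ)/2) = v ^ ((3:ℝ)/2) := by
      rw [Real.sign_of_pos hv, habsv, one_mul]
    have hmono : 2*κ*(v ^ ((3:ℝ)/2)) ≤ 2*κ*((2*Lbar) ^ ((3:ℝ)/2)) :=
      mul_le_mul_of_nonneg_left (Real.rpow_le_rpow hv.le hv2 (by norm_num)) (by positivity)
    have hLv : L*v ≤ L*(2*Lbar) := mul_le_mul_of_nonneg_left hv2 hL.le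
    rw [hsgn, habsv]
    rw [habsv] at hxv
    linarith
  · -- v > 2 Lbar
    have habsv : |v| = v := abs_of_pos (by linarith)
    have hsgn : Real.sign v * |v| ^ ((3:ℝ)/2) = v ^ ((3:ℝ)/2) := by
      rw [Real.sign_of_pos (by linarith), habsv, one_mul]
    rw [hsgn, habsv]
    have hvpos : (0:ℝ) < v := by linarith
    have hvr : 0 ≤ v ^ ((3:ℝ)/2) := Real.rpow_nonneg hvpos.le _
    have hMlb : v/2 ≤ M := by
      have h1 : v/2 ≤ x ^ 2 - (u - v) := by nlinarith
      exact h1.trans (le_max_left _ _)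
    have hMr2 : (v/2) ^ ((3:ℝ)/2) ≤ M ^ ((3:ℝ)/2) :=
      Real.rpow_le_rpow (by positivity) hMlb (by norm_num)
    have hdiv : (v/2) ^ ((3:ℝ)/2) = v ^ ((3:ℝ)/2) / (2:ℝ) ^ ((3:ℝ)/2) :=
      Real.div_rpow hvpos.le (by norm_num : (0:ℝ) ≤ 2) _
    have hthird : v ^ ((3:ℝ)/2) / 3 ≤ v ^ ((3:ℝ)/2) / (2:ℝ) ^ ((3:ℝ)/2) :=
      div_le_div_of_nonneg_left hvr (Real.rpow_pos_of_pos two_pos _) two_rpow_le_three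
    have hMfinal : v ^ ((3:ℝ)/2) / 3 ≤ M ^ ((3:ℝ)/2) := by
      rw [← hdiv] at hthird; linarith
    have hκv : 2*κ*v ^ ((3:ℝ)/2) ≤ 2/9 * v ^ ((3:ℝ)/2) :=
      mul_le_mul_of_nonneg_right (by linarith : 2*κ ≤ 2/9) hvr
    have hlin := lin_le (2*L+1) (2/9) v (by linarith) (by norm_num) hvpos.le
    rw [habsv] at hxv
    linarith

/-- The analytic content of Lemma C.2 (lem:S_integral_estimate): there is `κ⋆ > 0` such
that for every `0 < κ ≤ κ⋆` and all `L, L̄ > 0` there is a constant `C ≥ 0` such that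
for `|x| ≤ L`, `|u| ≤ L̄` the integral `∫ exp(2F(x, u - v) + 2G_κ(v)) dv` is finite and
bounded by `C`. -/
theorem conjugated_kernel_integral_bound :
    ∃ κstar : ℝ, 0 < κstar ∧ ∀ κ : ℝ, 0 < κ → κ ≤ κstar →
      ∀ L Lbar : ℝ, 0 < L → 0 < Lbar →
        ∃ C : ℝ, 0 ≤ C ∧ ∀ x u : ℝ, |x| ≤ L → |u| ≤ Lbar →
          Integrable (fun v : ℝ =>
            Real.exp (2 * airyExponent x (u - v) + 2 * scatteringExponent κ v)) ∧
          (∫ v : ℝ,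
            Real.exp (2 * airyExponent x (u - v) + 2 * scatteringExponent κ v)) ≤ C := by
  refine ⟨1/9, by norm_num, fun κ hκ hκ' L Lbar hL hLbar => ?_⟩
  set A : ℝ := (2/3*L^3 + 2*L*(L^2+Lbar)) + 4*L*Lbar + 2*κ*(2*Lbar)^((3:ℝ)/2) + 2*Lbar
        + (2*L+1)^3/(2*κ)^2 + (2*L+1)^3/((2:ℝ)/9)^2 with hA
  have hg : Integrable (fun v : ℝ => Real.exp (A - |v|)) := by
    have e : (fun v : ℝ => Real.exp (A - |v|)) = fun v => Real.exp A * Real.exp (-|v|) := by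
      funext v; rw [← Real.exp_add]; ring_nf
    rw [e]
    exact integrable_exp_neg_abs'.const_mul _
  refine ⟨∫ v : ℝ, Real.exp (A - |v|),
    integral_nonneg (fun v => (Real.exp_pos _).le), fun x u hx hu => ?_⟩
  have hbound : ∀ v : ℝ, 2 * airyExponent x (u - v) + 2 * scatteringExponent κ v ≤ A - |v| :=
    fun v => exponent_bound κ L Lbar x u v hκ hκ' hL hLbar hx hu
  have hcont : Continuous (fun v : ℝ =>
      Real.exp (2 * airyExponent x (u - v) + 2 * scatteringExponent κ v)) := by
    have e1 : ∀ v : ℝ, airyExponent x (u - v) =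
        -x^3/3 + x*(x^2-(u-v)) - 2/3*(max (x^2-(u-v)) 0 * Real.sqrt (max (x^2-(u-v)) 0)) :=
      fun v => by rw [airyExponent, rpow_three_halves (le_max_right _ _)]
    have e2 : ∀ v : ℝ, scatteringExponent κ v = κ * (v * Real.sqrt |v|) :=
      fun v => by rw [scatteringExponent, mul_assoc, sign_mul_rpow]
    simp only [e1, e2]
    fun_prop
  have hf : Integrable (fun v : ℝ =>
      Real.exp (2 * airyExponent x (u - v) + 2 * scatteringExponent κ v)) := by
    apply hg.mono' hcont.aestronglyMeasurable
    refine ae_of_all _ fun v => ?_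
    rw [Real.norm_eq_abs, abs_of_pos (Real.exp_pos _)]
    exact Real.exp_le_exp.mpr (hbound v)
  exact ⟨hf, integral_mono hf hg (fun v => Real.exp_le_exp.mpr (hbound v))⟩
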